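/- arXiv:2004.09782 — 2 statements merged into one kernel-verified Lean document; each statement's English description precedes it below -/
import Mathlib

section
/- Let V, H be complex vector spaces, j : V → H linear, 𝔞 : V × V → ℂ a sesquilinear form with 𝔞(u,v) = conj(𝔞(v,u)) (symmetric/Hermitian), and let V(𝔞) = {u ∈ V : 𝔞(u,v) = 0 for all v ∈ ker j}. Assume Re 𝔞(u,u) ≥ 0 for all u ∈ ker j. Let u ∈ V(𝔞), w ∈ V, w' ∈ V(𝔞) with j(w) = j(w') and Re 𝔞(w, u − w) ≥ 0. Then Re 𝔞(w', u − w') ≥ 0. -/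
theorem stmt_5 {V H : Type*} [AddCommGroup V] [Module ℂ V] [AddCommGroup H] [Module ℂ H]
    (j : V →ₗ[ℂ] H) (a : V →ₗ[ℂ] V →ₛₗ[starRingEnd ℂ] ℂ)
    (hherm : ∀ u v : V, a u v = (starRingEnd ℂ) (a v u))
    (haccr : ∀ u : V, j u = 0 → 0 ≤ (a u u).re)
    (u w w' : V)
    (hu : ∀ v : V, j v = 0 → a u v = 0)
    (hw' : ∀ v : V, j v = 0 → a w' v = 0)
    (hjw : j w = j w')
    (hpos : 0 ≤ (a w (u - w)).re) :
    0 ≤ (a w' (u - w')).re := by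
  have hk : j (w - w') = 0 := by rw [map_sub, hjw, sub_self]
  -- a (w - w') (u - w') = 0
  have e1 : a (w - w') (u - w') = 0 := by
    rw [hherm]
    have : a (u - w') (w - w') = 0 := by
      rw [show a (u - w') = a u - a w' from map_sub a u w', LinearMap.sub_apply,
        hu _ hk, hw' _ hk, sub_zero]
    rw [this]; simp
  have e2 : a w' (u - w') = a w (u - w') := by
    rw [show a (w - w') = a w - a w' from map_sub a w w', LinearMap.sub_apply] at e1
    exact (sub_eq_zero.mp e1).symm
  have e3 : a w (u - w') = a w (u - w) + a w (w - w') := by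
    rw [← map_add]; congr 1; abel
  have e4 : a w (w - w') = (starRingEnd ℂ) (a (w - w') (w - w')) := by
    rw [hherm]
    congr 1
    have h0 : a (w - w') w' = 0 := by
      have := hw' (w - w') hk
      rw [hherm] at this
      simpa using congrArg (starRingEnd ℂ) this
    rw [(a (w - w')).map_sub w w', h0, sub_zero]
  have hre : 0 ≤ (a w (w - w')).re := by
    rw [e4, Complex.conj_re]; exact haccr _ hk
  rw [e2, e3, Complex.add_re]
  exact add_nonneg hpos hre
end

section
/- Let H be a complex Hilbert space which is an L²-space over a σ-finite measure space, and let 𝒞 := {(φ, ψ) ∈ H × H : |φ| ≤ ψ a.e.}. Then the metric projection P : H × H → 𝒞 is given by P(φ, ψ) = (½[|φ| + |φ| ∧ Re ψ]⁺ · sgn φ, ½[|φ| ∨ Re ψ + Re ψ]⁺), where sgn φ(x) = φ(x)/|φ(x)| if φ(x) ≠ 0 and 0 otherwise, ∧ and ∨ are pointwise min and max, and [·]⁺ is the pointwise positive part. -/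
/-!
Everything happens pointwise. Writing `a = φ x`, `b = ψ x`, the point of the cone
`{(f, g) : |f| ≤ g}` of `ℂ × ℂ` closest to `(a, b)` keeps the phase of `a`, so it is found by
projecting `(|a|, Re b)` onto the planar cone `{(t, u) : |t| ≤ u}`; the imaginary part of `b` is
lost in any case. Integrating the pointwise inequality gives the `L²` statement.
-/

open MeasureTheory

noncomputable def coneProjRadius (r s : ℝ) : ℝ := 1 / 2 * max (r + min r s) 0

noncomputable def coneProjHeight (r s : ℝ) : ℝ := 1 / 2 * max (max r s + s) 0

lemma coneProjRadius_nonneg (r s : ℝ) : 0 ≤ coneProjRadius r s :=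
  mul_nonneg (by norm_num) (le_max_right _ _)

lemma coneProjRadius_zero_left (s : ℝ) : coneProjRadius 0 s = 0 := by
  simp [coneProjRadius]

lemma coneProjRadius_le_coneProjHeight (r s : ℝ) : coneProjRadius r s ≤ coneProjHeight r s :=
  mul_le_mul_of_nonneg_left (max_le_max (add_le_add (le_max_left r s) (min_le_right r s)) le_rfl)
    (by norm_num)

lemma sq_sub_coneProj_le {r s t u : ℝ} (hr : 0 ≤ r) (ht : 0 ≤ t) (htu : t ≤ u) :
    (r - coneProjRadius r s) ^ 2 + (s - coneProjHeight r s) ^ 2 ≤ (r - t) ^ 2 + (s - u) ^ 2 := by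
  unfold coneProjRadius coneProjHeight
  -- Three regimes: `(r, s)` already in the cone, projected to the boundary ray `t = u`,
  -- or (when `r + s ≤ 0`) to the vertex.
  rcases le_total r s with h | h
  · rw [min_eq_left h, max_eq_right h, max_eq_left (by linarith), max_eq_left (by linarith)]
    nlinarith
  · rw [min_eq_right h, max_eq_left h]
    rcases le_total 0 (r + s) with h₀ | h₀
    · rw [max_eq_left h₀]
      nlinarith [mul_nonneg (sub_nonneg.2 h) (sub_nonneg.2 htu), sq_nonneg (t - u),
        sq_nonneg (t + u - r - s)]
    · rw [max_eq_right h₀]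
      nlinarith [mul_nonneg (ht.trans htu) (by linarith : 0 ≤ -s - r),
        mul_nonneg hr (sub_nonneg.2 htu)]

lemma norm_ofReal_mul_div_norm_le (a : ℂ) {t : ℝ} (ht : 0 ≤ t) :
    ‖(t : ℂ) * (a / ((‖a‖ : ℝ) : ℂ))‖ ≤ t := by
  rcases eq_or_ne a 0 with rfl | ha
  · simpa using ht
  · simp [ha, abs_of_nonneg ht]

lemma norm_sub_ofReal_mul_div_norm (a : ℂ) {t : ℝ} (h₀ : a = 0 → t = 0) :
    ‖a - (t : ℂ) * (a / ((‖a‖ : ℝ) : ℂ))‖ = |‖a‖ - t| := by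
  rcases eq_or_ne a 0 with rfl | ha
  · simp [h₀ rfl]
  · have hn : ((‖a‖ : ℝ) : ℂ) ≠ 0 := by simpa using ha
    have : a - (t : ℂ) * (a / ((‖a‖ : ℝ) : ℂ)) = ((‖a‖ - t : ℝ) : ℂ) * (a / ((‖a‖ : ℝ) : ℂ)) := by
      field_simp
      push_cast
      ring
    rw [this, norm_mul, Complex.norm_real, Real.norm_eq_abs, norm_div, Complex.norm_real, norm_norm,
      div_self (norm_ne_zero_iff.2 ha), mul_one]

def complexCone : Set (ℂ × ℂ) := {p | ‖p.1‖ ≤ p.2.re ∧ p.2.im = 0}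

noncomputable def coneProj (a b : ℂ) : ℂ × ℂ :=
  (((coneProjRadius ‖a‖ b.re : ℝ) : ℂ) * (a / ((‖a‖ : ℝ) : ℂ)), ((coneProjHeight ‖a‖ b.re : ℝ) : ℂ))

lemma coneProj_mem (a b : ℂ) : coneProj a b ∈ complexCone :=
  ⟨(norm_ofReal_mul_div_norm_le a (coneProjRadius_nonneg _ _)).trans
    (coneProjRadius_le_coneProjHeight _ _), Complex.ofReal_im _⟩

lemma norm_sub_ofReal_sq (b : ℂ) (u : ℝ) : ‖b - u‖ ^ 2 = (b.re - u) ^ 2 + b.im ^ 2 := by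
  rw [Complex.sq_norm, Complex.normSq_apply]
  simp only [Complex.sub_re, Complex.sub_im, Complex.ofReal_re, Complex.ofReal_im]
  ring

lemma norm_sub_coneProj_sq_le (a b : ℂ) {p : ℂ × ℂ} (hp : p ∈ complexCone) :
    ‖a - (coneProj a b).1‖ ^ 2 + ‖b - (coneProj a b).2‖ ^ 2 ≤ ‖a - p.1‖ ^ 2 + ‖b - p.2‖ ^ 2 := by
  obtain ⟨f, g⟩ := p
  obtain ⟨hfg, hg⟩ : ‖f‖ ≤ g.re ∧ g.im = 0 := hp
  have hg' : g = (g.re : ℂ) := Complex.ext rfl (by simpa using hg)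
  have hradial : ‖a - (coneProj a b).1‖ = |‖a‖ - coneProjRadius ‖a‖ b.re| :=
    norm_sub_ofReal_mul_div_norm a fun ha => by rw [ha, norm_zero, coneProjRadius_zero_left]
  have hphase : (‖a‖ - ‖f‖) ^ 2 ≤ ‖a - f‖ ^ 2 := by
    rw [← sq_abs]
    exact pow_le_pow_left₀ (abs_nonneg _) (abs_norm_sub_norm_le a f) 2
  have hplanar := sq_sub_coneProj_le (s := b.re) (norm_nonneg a) (norm_nonneg f) hfg
  rw [hradial, show (coneProj a b).2 = ((coneProjHeight ‖a‖ b.re : ℝ) : ℂ) from rfl, hg',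
    norm_sub_ofReal_sq, norm_sub_ofReal_sq, sq_abs]
  linarith

namespace MeasureTheory.L2

variable {α 𝕜 E : Type*} [MeasurableSpace α] {μ : Measure α} [RCLike 𝕜]
  [NormedAddCommGroup E] [InnerProductSpace 𝕜 E]

include 𝕜 in
lemma norm_sq_eq_integral_norm_sq (f : α →₂[μ] E) : ‖f‖ ^ 2 = ∫ x, ‖f x‖ ^ 2 ∂μ := by
  rw [@norm_sq_eq_re_inner 𝕜, inner_def, ← integral_re (integrable_inner f f)]
  simp_rw [inner_self_eq_norm_sq]

include 𝕜 in
lemma integrable_norm_sq (f : α →₂[μ] E) : Integrable (fun x => ‖f x‖ ^ 2) μ :=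
  (integrable_inner (𝕜 := 𝕜) f f).re.congr (.of_forall fun x => inner_self_eq_norm_sq (f x))

include 𝕜 in
lemma norm_sq_add_norm_sq_le_of_ae_le {f₁ g₁ f₂ g₂ : α →₂[μ] E}
    (h : ∀ᵐ x ∂μ, ‖f₁ x‖ ^ 2 + ‖g₁ x‖ ^ 2 ≤ ‖f₂ x‖ ^ 2 + ‖g₂ x‖ ^ 2) :
    ‖f₁‖ ^ 2 + ‖g₁‖ ^ 2 ≤ ‖f₂‖ ^ 2 + ‖g₂‖ ^ 2 := by
  have hi : ∀ f : α →₂[μ] E, Integrable (fun x => ‖f x‖ ^ 2) μ := integrable_norm_sq (𝕜 := 𝕜)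
  simp only [norm_sq_eq_integral_norm_sq (𝕜 := 𝕜)]
  rw [← integral_add (hi f₁) (hi g₁), ← integral_add (hi f₂) (hi g₂)]
  exact integral_mono_ae ((hi f₁).add (hi g₁)) ((hi f₂).add (hi g₂)) h

end MeasureTheory.L2

theorem stmt_10_general {X : Type*} [MeasurableSpace X] (μ : Measure X)
    (φ ψ φ' ψ' : Lp ℂ 2 μ)
    (hφ' : ∀ᵐ x ∂μ, φ' x =
      (((1 / 2 : ℝ) * max (‖φ x‖ + min (‖φ x‖) (ψ x).re) 0 : ℝ) : ℂ) *
        (φ x / ((‖φ x‖ : ℝ) : ℂ)))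
    (hψ' : ∀ᵐ x ∂μ, ψ' x =
      (((1 / 2 : ℝ) * max (max (‖φ x‖) (ψ x).re + (ψ x).re) 0 : ℝ) : ℂ)) :
    (∀ᵐ x ∂μ, ‖φ' x‖ ≤ (ψ' x).re ∧ (ψ' x).im = 0) ∧
      ∀ f g : Lp ℂ 2 μ,
        (∀ᵐ x ∂μ, ‖f x‖ ≤ (g x).re ∧ (g x).im = 0) →
        ‖φ - φ'‖ ^ 2 + ‖ψ - ψ'‖ ^ 2 ≤ ‖φ - f‖ ^ 2 + ‖ψ - g‖ ^ 2 := by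
  refine ⟨?_, fun f g hfg => ?_⟩
  · filter_upwards [hφ', hψ'] with x h₁ h₂
    rw [h₁, h₂]
    exact coneProj_mem (φ x) (ψ x)
  · refine L2.norm_sq_add_norm_sq_le_of_ae_le (𝕜 := ℂ) ?_
    filter_upwards [hφ', hψ', hfg, Lp.coeFn_sub φ φ', Lp.coeFn_sub ψ ψ', Lp.coeFn_sub φ f,
      Lp.coeFn_sub ψ g] with x h₁ h₂ hx e₁ e₂ e₃ e₄
    rw [e₁, e₂, e₃, e₄, Pi.sub_apply, Pi.sub_apply, Pi.sub_apply, Pi.sub_apply, h₁, h₂]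
    exact norm_sub_coneProj_sq_le (φ x) (ψ x) (p := (f x, g x)) hx

theorem stmt_10 {X : Type*} [MeasurableSpace X] (μ : Measure X) [SigmaFinite μ]
    (φ ψ φ' ψ' : Lp ℂ 2 μ)
    (hφ' : ∀ᵐ x ∂μ, φ' x =
      (((1 / 2 : ℝ) * max (‖φ x‖ + min (‖φ x‖) (ψ x).re) 0 : ℝ) : ℂ) *
        (φ x / ((‖φ x‖ : ℝ) : ℂ)))
    (hψ' : ∀ᵐ x ∂μ, ψ' x =
      (((1 / 2 : ℝ) * max (max (‖φ x‖) (ψ x).re + (ψ x).re) 0 : ℝ) : ℂ)) :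
    (∀ᵐ x ∂μ, ‖φ' x‖ ≤ (ψ' x).re ∧ (ψ' x).im = 0) ∧
      ∀ f g : Lp ℂ 2 μ,
        (∀ᵐ x ∂μ, ‖f x‖ ≤ (g x).re ∧ (g x).im = 0) →
        ‖φ - φ'‖ ^ 2 + ‖ψ - ψ'‖ ^ 2 ≤ ‖φ - f‖ ^ 2 + ‖ψ - g‖ ^ 2 :=
  stmt_10_general μ φ ψ φ' ψ' hφ' hψ'
end
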